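/- arXiv:1908.02474 — 4 statements merged into one kernel-verified Lean document; each statement's English description precedes it below -/
import Mathlib

section
/- For the Pythagorean parametrization x = 2nk + k², y = 2n² + 2nk, z = 2n² + 2nk + k² with n, k positive integers, the ratio z/|x − y| equals ((k/n)² + 2(k/n) + 2)/|(k/n)² − 2|, and hence for any constant C > 0 there exist n, k (with k even) such that z > C·|x − y|. -/
/-!
Dividing numerator and denominator by `n²` turns `z / |x - y|` into a function of `t = k / n`,
and `x - y = k² - 2n²`. Along the Pell solutions `a² - 2b² = 1`, the choice `n = a`, `k = 2b`
gives `|x - y| = 2` while `z ≥ 2a²` is unbounded.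
-/

theorem pythagorean_legs_sub {R : Type*} [CommRing R] (n k : R) :
    (2 * n * k + k ^ 2) - (2 * n ^ 2 + 2 * n * k) = k ^ 2 - 2 * n ^ 2 := by
  ring

theorem pythagorean_ratio_eq {K : Type*} [Field K] [LinearOrder K] [IsStrictOrderedRing K]
    (k : K) {n : K} (hn : n ≠ 0) :
    (2 * n ^ 2 + 2 * n * k + k ^ 2) / |(2 * n * k + k ^ 2) - (2 * n ^ 2 + 2 * n * k)|
      = ((k / n) ^ 2 + 2 * (k / n) + 2) / |(k / n) ^ 2 - 2| := by
  have hz : 2 * n ^ 2 + 2 * n * k + k ^ 2 = n ^ 2 * ((k / n) ^ 2 + 2 * (k / n) + 2) := by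
    field_simp
    ring
  have hxy : k ^ 2 - 2 * n ^ 2 = n ^ 2 * ((k / n) ^ 2 - 2) := by
    field_simp
  rw [pythagorean_legs_sub, hz, hxy, abs_mul, abs_sq]
  exact mul_div_mul_left _ _ (pow_ne_zero 2 hn)

-- The solutions of `x² - 8y² = 1` generated by `3 + √8` give `x² - 2(2y)² = 1`.
theorem exists_sq_sub_two_mul_sq_eq_one_gt (m : ℕ) :
    ∃ a b : ℕ, m < a ∧ 0 < b ∧ (a : ℤ) ^ 2 - 2 * (b : ℤ) ^ 2 = 1 := by
  have h3 : 1 < 3 := by norm_num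
  refine ⟨Pell.xn h3 (m + 1), 2 * Pell.yn h3 (m + 1),
    (Nat.lt_succ_self m).trans (Pell.n_lt_xn h3 _),
    Nat.mul_pos two_pos ((Nat.succ_pos m).trans_le (Pell.yn_ge_n h3 _)), ?_⟩
  have hpell := Pell.pell_eqz h3 (m + 1)
  rw [Pell.dz_val] at hpell
  simp only [Pell.xz, Pell.yz, Pell.az] at hpell
  push_cast
  linear_combination hpell

/-- For x = 2nk + k², y = 2n² + 2nk, z = 2n² + 2nk + k² (n, k positive integers),
the ratio z/|x − y| equals ((k/n)² + 2(k/n) + 2)/|(k/n)² − 2|, and for any C > 0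
one can choose n, k with k even such that z > C·|x − y|. -/
theorem pythagorean_ratio :
    (∀ n k : ℕ, 0 < n → 0 < k → ((k : ℝ) / n) ^ 2 ≠ 2 →
      ((2 * (n : ℝ) ^ 2 + 2 * n * k + k ^ 2) /
          |(2 * (n : ℝ) * k + k ^ 2) - (2 * (n : ℝ) ^ 2 + 2 * n * k)|
        = (((k : ℝ) / n) ^ 2 + 2 * ((k : ℝ) / n) + 2) / |((k : ℝ) / n) ^ 2 - 2|)) ∧
    (∀ C : ℝ, 0 < C → ∃ n k : ℕ, 0 < n ∧ 0 < k ∧ Even k ∧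
      (2 * (n : ℝ) ^ 2 + 2 * n * k + k ^ 2)
        > C * |(2 * (n : ℝ) * k + k ^ 2) - (2 * (n : ℝ) ^ 2 + 2 * n * k)|) := by
  refine ⟨fun n k hn _ _ => pythagorean_ratio_eq (k : ℝ) (Nat.cast_ne_zero.mpr hn.ne'),
    fun C _ => ?_⟩
  obtain ⟨a, b, hma, hb, hpell⟩ := exists_sq_sub_two_mul_sq_eq_one_gt ⌈C⌉₊
  refine ⟨a, 2 * b, by omega, by omega, even_two_mul b, ?_⟩
  have hpell' : (a : ℝ) ^ 2 - 2 * (b : ℝ) ^ 2 = 1 := by exact_mod_cast hpell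
  have hCa : C < a := (Nat.le_ceil C).trans_lt (by exact_mod_cast hma)
  have ha : (1 : ℝ) ≤ a := by exact_mod_cast (show 1 ≤ a by omega)
  have hsub : ((2 * b : ℕ) : ℝ) ^ 2 - 2 * (a : ℝ) ^ 2 = -2 := by
    push_cast
    linear_combination -2 * hpell'
  rw [pythagorean_legs_sub, hsub, abs_neg, abs_two]
  push_cast
  nlinarith [Nat.cast_nonneg (α := ℝ) b]
end

section
/- The closure in ℝ of the set { ef/(e+f) : e, f ∈ ℤ_{>0} } equals { ef/(e+f) : e, f ∈ ℤ_{>0} } ∪ ℤ_{>0}. -/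
/-!
Write `e ∥ f = ef/(e+f)`. By symmetry every point of `J` is `m ∥ f` with `m ≤ f`, and such a value
lies in `[m/2, m]`. For fixed `m` the values `m ∥ f` tend to `m` as `f → ∞`, so together with `m`
they form a closed set; these sets are locally finite in `m`, so their union `J ∪ ℤ_{>0}` is closed.
Conversely every positive integer `m` is a limit of the points `m ∥ f` of `J`.
-/

open Filter Set Topology

noncomputable section

def parallelSum (a b : ℝ) : ℝ := a * b / (a + b)

lemma parallelSum_comm (a b : ℝ) : parallelSum a b = parallelSum b a := by
  simp only [parallelSum, mul_comm, add_comm]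

lemma tendsto_parallelSum_atTop (a : ℝ) : Tendsto (parallelSum a) atTop (𝓝 a) := by
  have hlim : Tendsto (fun x : ℝ => a - a ^ 2 / (a + x)) atTop (𝓝 (a - 0)) :=
    tendsto_const_nhds.sub <|
      tendsto_const_nhds.div_atTop (tendsto_atTop_add_const_left _ a tendsto_id)
  rw [sub_zero] at hlim
  refine hlim.congr' ?_
  filter_upwards [eventually_gt_atTop (-a)] with x hx
  have hax : a + x ≠ 0 := by linarith
  simp only [parallelSum]
  field_simp
  ring

lemma parallelSum_mem_Icc {a b : ℝ} (ha : 0 < a) (hab : a ≤ b) :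
    parallelSum a b ∈ Icc (a / 2) a := by
  have hpos : 0 < a + b := by linarith
  constructor
  · rw [parallelSum, div_le_div_iff₀ two_pos hpos]
    nlinarith
  · rw [parallelSum, div_le_iff₀ hpos]
    nlinarith

def parallelSumFiber (a : ℝ) : Set ℝ :=
  insert a (range fun k : ℕ => parallelSum a (a + k))

lemma isClosed_parallelSumFiber (a : ℝ) : IsClosed (parallelSumFiber a) :=
  ((tendsto_parallelSum_atTop a).comp
    (tendsto_atTop_add_const_left _ a tendsto_natCast_atTop_atTop)).isCompact_insert_range.isClosed

lemma parallelSumFiber_subset_Icc {a : ℝ} (ha : 0 < a) : parallelSumFiber a ⊆ Icc (a / 2) a := by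
  rintro x (rfl | ⟨k, rfl⟩)
  · exact ⟨by linarith, le_rfl⟩
  · exact parallelSum_mem_Icc ha (le_add_of_nonneg_right k.cast_nonneg)

lemma locallyFinite_parallelSumFiber :
    LocallyFinite fun m : ℕ => parallelSumFiber (m + 1) := by
  intro x
  refine ⟨Iio (x + 1), Iio_mem_nhds (lt_add_one x), (finite_Iio ⌈2 * x + 1⌉₊).subset ?_⟩
  rintro m ⟨y, hy, hyx⟩
  have hm := (parallelSumFiber_subset_Icc (Nat.cast_add_one_pos m) hy).1
  have : (m : ℝ) < 2 * x + 1 := by linarith [mem_Iio.mp hyx]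
  exact Nat.lt_ceil.mpr this

def posNatParallelSums : Set ℝ :=
  {x | ∃ e f : ℕ, 0 < e ∧ 0 < f ∧ x = parallelSum e f}

lemma posNatParallelSums_subset_iUnion :
    posNatParallelSums ⊆ ⋃ m : ℕ, parallelSumFiber (m + 1) := by
  suffices key : ∀ e f : ℕ, 0 < e → e ≤ f →
      parallelSum e f ∈ ⋃ m : ℕ, parallelSumFiber (m + 1) by
    rintro x ⟨e, f, he, hf, rfl⟩
    rcases le_total e f with hef | hfe
    · exact key e f he hef
    · exact parallelSum_comm (e : ℝ) f ▸ key f e hf hfe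
  intro e f he hef
  obtain ⟨m, rfl⟩ := Nat.exists_eq_add_of_lt he
  obtain ⟨k, rfl⟩ := Nat.exists_eq_add_of_le hef
  exact mem_iUnion.mpr ⟨m, Or.inr ⟨k, by push_cast; ring_nf⟩⟩

lemma iUnion_parallelSumFiber_subset :
    ⋃ m : ℕ, parallelSumFiber (m + 1) ⊆
      posNatParallelSums ∪ {x : ℝ | ∃ m : ℕ, 0 < m ∧ x = (m : ℝ)} := by
  simp only [iUnion_subset_iff]
  rintro m x (rfl | ⟨k, rfl⟩)
  · exact Or.inr ⟨m + 1, m.succ_pos, by push_cast; rfl⟩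
  · exact Or.inl ⟨m + 1, m + 1 + k, m.succ_pos, by omega, by push_cast; rfl⟩

lemma natCast_mem_closure_posNatParallelSums {m : ℕ} (hm : 0 < m) :
    (m : ℝ) ∈ closure posNatParallelSums :=
  mem_closure_of_tendsto
    ((tendsto_parallelSum_atTop m).comp tendsto_natCast_atTop_atTop)
    (eventually_gt_atTop 0 |>.mono fun f hf => ⟨m, f, hm, hf, rfl⟩)

end

/-- The closure of J = { ef/(e+f) : e, f ∈ ℤ_{>0} } in ℝ is J ∪ ℤ_{>0}. -/
theorem closure_of_ELSV_set :
    closure {x : ℝ | ∃ e f : ℕ, 0 < e ∧ 0 < f ∧ x = (e : ℝ) * f / (e + f)}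
      = {x : ℝ | ∃ e f : ℕ, 0 < e ∧ 0 < f ∧ x = (e : ℝ) * f / (e + f)}
        ∪ {x : ℝ | ∃ m : ℕ, 0 < m ∧ x = (m : ℝ)} := by
  change closure posNatParallelSums = posNatParallelSums ∪ _
  have hclosed : IsClosed (⋃ m : ℕ, parallelSumFiber (m + 1)) :=
    locallyFinite_parallelSumFiber.isClosed_iUnion fun m => isClosed_parallelSumFiber _
  refine subset_antisymm ?_ (union_subset subset_closure ?_)
  · calc closure posNatParallelSums
        ⊆ ⋃ m : ℕ, parallelSumFiber (m + 1) :=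
          closure_minimal posNatParallelSums_subset_iUnion hclosed
      _ ⊆ _ := iUnion_parallelSumFiber_subset
  · rintro _ ⟨m, hm, rfl⟩
    exact natCast_mem_closure_posNatParallelSums hm
end

section
/- Let P₁ = { (x,y) ∈ ℝ_{≥0}² : xy ≥ 1 } and P₂ = { (x,y) : x > 1, y > 1, (x−1)(y−1) ≥ 1 }. Then for every c > 0, the Minkowski sum P₂ + c·P₁ equals { (x,y) ∈ ℝ_{≥0}² : x > 1, y > 1, (x−1)(y−1) ≥ (c+1)² }. -/
/-!
Every set in the statement is, up to translation by `(1, 1)`, a region `{x, y ≥ 0, r² ≤ x y}`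
above a hyperbola: `P₁` for `r = 1`, `c • P₁` for `r = c`, `P₂` for `r = 1` and the right-hand side
for `r = c + 1`. These regions add like their parameters, because `√(x y)` is superadditive on the
closed quadrant.
-/

open scoped Pointwise

def hyperbolicRegion (r : ℝ) : Set (ℝ × ℝ) :=
  {p | 0 ≤ p.1 ∧ 0 ≤ p.2 ∧ r ^ 2 ≤ p.1 * p.2}

theorem smul_mem_hyperbolicRegion {t r : ℝ} {p : ℝ × ℝ} (ht : 0 ≤ t)
    (hp : p ∈ hyperbolicRegion r) : t • p ∈ hyperbolicRegion (t * r) := by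
  obtain ⟨hx, hy, hxy⟩ := hp
  refine ⟨mul_nonneg ht hx, mul_nonneg ht hy, ?_⟩
  calc (t * r) ^ 2 = t ^ 2 * r ^ 2 := by ring
    _ ≤ t ^ 2 * (p.1 * p.2) := by gcongr
    _ = (t • p).1 * (t • p).2 := by simp only [Prod.smul_fst, Prod.smul_snd, smul_eq_mul]; ring

theorem smul_hyperbolicRegion {t : ℝ} (ht : 0 < t) (r : ℝ) :
    t • hyperbolicRegion r = hyperbolicRegion (t * r) := by
  ext p
  rw [Set.mem_smul_set_iff_inv_smul_mem₀ ht.ne']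
  constructor
  · intro hp
    simpa [smul_smul, ht.ne'] using smul_mem_hyperbolicRegion ht.le hp
  · intro hp
    simpa [← mul_assoc, ht.ne'] using smul_mem_hyperbolicRegion (inv_nonneg.2 ht.le) hp

theorem add_mem_hyperbolicRegion {a b : ℝ} {p q : ℝ × ℝ} (ha : 0 ≤ a) (hb : 0 ≤ b)
    (hp : p ∈ hyperbolicRegion a) (hq : q ∈ hyperbolicRegion b) :
    p + q ∈ hyperbolicRegion (a + b) := by
  obtain ⟨hx₁, hy₁, hxy₁⟩ := hp
  obtain ⟨hx₂, hy₂, hxy₂⟩ := hq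
  refine ⟨add_nonneg hx₁ hx₂, add_nonneg hy₁ hy₂, ?_⟩
  -- AM–GM on the cross terms: `(x₁ y₂ + x₂ y₁)² ≥ 4 x₁ y₁ x₂ y₂ ≥ (2 a b)²`.
  have hcross : 2 * a * b ≤ p.1 * q.2 + q.1 * p.2 := by
    have hsq : (2 * a * b) ^ 2 ≤ (p.1 * q.2 + q.1 * p.2) ^ 2 := by
      nlinarith [sq_nonneg (p.1 * q.2 - q.1 * p.2), mul_le_mul hxy₁ hxy₂ (sq_nonneg b)
        (mul_nonneg hx₁ hy₁)]
    exact (pow_le_pow_iff_left₀ (by positivity) (by positivity) two_ne_zero).1 hsq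
  simp only [Prod.fst_add, Prod.snd_add]
  nlinarith

theorem hyperbolicRegion_add_hyperbolicRegion {a b : ℝ} (ha : 0 ≤ a) (hb : 0 ≤ b) :
    hyperbolicRegion a + hyperbolicRegion b = hyperbolicRegion (a + b) := by
  refine subset_antisymm ?_ fun p hp => ?_
  · rintro _ ⟨p, hp, q, hq, rfl⟩
    exact add_mem_hyperbolicRegion ha hb hp hq
  -- Split `p` in the ratio `a : b`; when `a + b = 0` the junk value `a / 0 = 0` still works.
  set t := a / (a + b)
  have hta : t * (a + b) = a := div_mul_cancel_of_imp fun h => by linarith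
  have ht₀ : 0 ≤ t := div_nonneg ha (add_nonneg ha hb)
  have ht₁ : t ≤ 1 := div_le_one_of_le₀ (by linarith) (add_nonneg ha hb)
  refine ⟨t • p, ?_, (1 - t) • p, ?_, ?_⟩
  · simpa [hta] using smul_mem_hyperbolicRegion ht₀ hp
  · simpa [sub_mul, hta] using smul_mem_hyperbolicRegion (sub_nonneg.2 ht₁) hp
  · change t • p + (1 - t) • p = p
    rw [← add_smul, add_sub_cancel, one_smul]

theorem setOf_one_lt_eq_vadd_hyperbolicRegion {r : ℝ} (hr : 0 < r) :
    {p : ℝ × ℝ | 1 < p.1 ∧ 1 < p.2 ∧ (p.1 - 1) * (p.2 - 1) ≥ r ^ 2}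
      = ((1, 1) : ℝ × ℝ) +ᵥ hyperbolicRegion r := by
  ext ⟨x, y⟩
  simp only [Set.mem_vadd_set_iff_neg_vadd_mem, hyperbolicRegion, Set.mem_ofPred_eq,
    vadd_eq_add, neg_add_eq_sub, Prod.fst_sub, Prod.snd_sub, ge_iff_le]
  constructor
  · rintro ⟨hx, hy, hxy⟩
    exact ⟨sub_nonneg.2 hx.le, sub_nonneg.2 hy.le, hxy⟩
  · rintro ⟨hx, hy, hxy⟩
    have hpos := (pow_pos hr 2).trans_le hxy
    exact ⟨sub_pos.1 (pos_of_mul_pos_left hpos hy), sub_pos.1 (pos_of_mul_pos_right hpos hx), hxy⟩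

/-- For P₁ = { (x,y) ∈ ℝ_{≥0}² : xy ≥ 1 } and
P₂ = { (x,y) : x > 1, y > 1, (x−1)(y−1) ≥ 1 }, for every c > 0 the Minkowski sum
P₂ + c·P₁ equals { (x,y) : x > 1, y > 1, (x−1)(y−1) ≥ (c+1)² }. -/
theorem minkowski_sum_newton_bodies (c : ℝ) (hc : 0 < c) :
    ({p : ℝ × ℝ | 1 < p.1 ∧ 1 < p.2 ∧ (p.1 - 1) * (p.2 - 1) ≥ 1}
        + c • {p : ℝ × ℝ | 0 ≤ p.1 ∧ 0 ≤ p.2 ∧ p.1 * p.2 ≥ 1})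
      = {p : ℝ × ℝ | 1 < p.1 ∧ 1 < p.2 ∧ (p.1 - 1) * (p.2 - 1) ≥ (c + 1) ^ 2} := by
  have hP₁ : {p : ℝ × ℝ | 0 ≤ p.1 ∧ 0 ≤ p.2 ∧ p.1 * p.2 ≥ 1} = hyperbolicRegion 1 := by
    simp only [hyperbolicRegion, one_pow, ge_iff_le]
  have hP₂ := setOf_one_lt_eq_vadd_hyperbolicRegion one_pos
  rw [one_pow] at hP₂
  rw [hP₁, hP₂, setOf_one_lt_eq_vadd_hyperbolicRegion (by linarith), smul_hyperbolicRegion hc,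
    mul_one, vadd_add_assoc, hyperbolicRegion_add_hyperbolicRegion zero_le_one hc.le, add_comm 1 c]
end

section
/- Let P ⊆ ℝ_{≥0}² be a closed convex set with P + ℝ_{≥0}² ⊆ P, and let x₀ = inf pr₁(P) > 0 with the vertical line { (x₀, t) : t ∈ ℝ } disjoint from P. Then for every positive integer k, the number k/x₀ is a limit point of the set C = { c > 0 : ∂(cP) ∩ ℤ_{>0}² ≠ ∅ }. -/
open scoped Pointwise
open Set Topology

/-!
Fix `k` and `c₀` slightly below `k / x₀`. Since `inf pr₁(P) = x₀ < k / c₀` and `P` is closed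
upwards, `(k, q) ∈ c₀ • P` for every large integer `q`. Along the ray `t ↦ t • (k, q)` the
first parameter `t` with `t • (k, q) ∈ P` lands on `∂P`, and `t ≥ x₀ / k`, with equality excluded
because the asymptote `x = x₀` misses `P`. Hence `c = t⁻¹ ∈ C` and `c₀ ≤ c < k / x₀`.
-/

theorem frontier_smul₀ {G₀ α : Type*} [GroupWithZero G₀] [MulAction G₀ α] [TopologicalSpace α]
    [ContinuousConstSMul G₀ α] {c : G₀} (hc : c ≠ 0) (s : Set α) :
    frontier (c • s) = c • frontier s :=
  ((Homeomorph.smulOfNeZero c hc).image_frontier s).symm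

theorem exists_smul_mem_frontier_of_forall_le {E : Type*} [AddCommGroup E] [Module ℝ E]
    [TopologicalSpace E] [ContinuousSMul ℝ E] {P : Set E} (hP : IsClosed P) {v : E} {t₁ b : ℝ}
    (ht₁ : t₁ • v ∈ P) (hb : ∀ t : ℝ, t • v ∈ P → b ≤ t) :
    ∃ t, b ≤ t ∧ t ≤ t₁ ∧ t • v ∈ frontier P := by
  have hcont : Continuous fun t : ℝ => t • v := continuous_id.smul continuous_const
  set T : Set ℝ := (fun t : ℝ => t • v) ⁻¹' P
  have hbdd : BddBelow T := ⟨b, hb⟩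
  have hmem : sInf T ∈ T := (hP.preimage hcont).csInf_mem ⟨t₁, ht₁⟩ hbdd
  refine ⟨sInf T, hb _ hmem, csInf_le hbdd ht₁, hP.frontier_eq ▸ ⟨hmem, fun hint => ?_⟩⟩
  obtain ⟨l, hl, hsub⟩ := exists_Ioc_subset_of_mem_nhds
    ((isOpen_interior.preimage hcont).mem_nhds hint) ⟨sInf T - 1, sub_one_lt _⟩
  have hmid : (l + sInf T) / 2 ∈ T :=
    interior_subset (s := P) (hsub (show (l + sInf T) / 2 ∈ Ioc l (sInf T) by
      constructor <;> linarith))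
  linarith [csInf_le hbdd hmid]

theorem mem_closure_diff_singleton_of_eventually {C : Set ℝ} {a : ℝ}
    (h : ∀ᶠ b in 𝓝[<] a, ∃ c ∈ C, b ≤ c ∧ c < a) : a ∈ closure (C \ {a}) := by
  refine Metric.mem_closure_iff.2 fun ε hε => ?_
  obtain ⟨b, ⟨c, hcC, hbc, hca⟩, hb, -⟩ := (h.and (Ioo_mem_nhdsLT (sub_lt_self a hε))).exists
  refine ⟨c, ⟨hcC, hca.ne⟩, ?_⟩
  rw [Real.dist_eq, abs_of_pos (sub_pos.2 hca)]
  linarith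

section UpperSet

variable {P : Set (ℝ × ℝ)}

theorem isUpperSet_of_add_quadrant_subset
    (horth : P + {p : ℝ × ℝ | 0 ≤ p.1 ∧ 0 ≤ p.2} ⊆ P) : IsUpperSet P := fun p q hpq hp => by
  simpa using horth (add_mem_add hp (show q - p ∈ _ from ⟨sub_nonneg.2 hpq.1, sub_nonneg.2 hpq.2⟩))

theorem exists_forall_mk_mem_of_sInf_lt (hup : IsUpperSet P) (hne : P.Nonempty)
    (hbdd : BddBelow (Prod.fst '' P)) {x : ℝ} (hx : sInf (Prod.fst '' P) < x) :
    ∃ y₀, ∀ y, y₀ ≤ y → (x, y) ∈ P := by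
  obtain ⟨_, ⟨p, hp, rfl⟩, hpx⟩ := (csInf_lt_iff hbdd (hne.image _)).1 hx
  exact ⟨p.2, fun y hy => hup ⟨hpx.le, hy⟩ hp⟩

theorem exists_mem_frontier_smul_of_lt_div (hclosed : IsClosed P) (hup : IsUpperSet P)
    (hne : P.Nonempty) (hbdd : BddBelow (Prod.fst '' P)) {x₀ : ℝ} (hx₀ : x₀ = sInf (Prod.fst '' P))
    (hx₀pos : 0 < x₀) (hasym : ∀ t : ℝ, (x₀, t) ∉ P) {k : ℕ} (hk : 0 < k) {c₀ : ℝ}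
    (hc₀ : 0 < c₀) (hc₀k : c₀ < k / x₀) :
    ∃ c, c₀ ≤ c ∧ c < k / x₀ ∧ ∃ q : ℕ, 0 < q ∧ ((k : ℝ), (q : ℝ)) ∈ frontier (c • P) := by
  have hkpos : (0 : ℝ) < k := Nat.cast_pos.2 hk
  have hlb : ∀ p ∈ P, x₀ ≤ p.1 := fun p hp => hx₀ ▸ csInf_le hbdd ⟨p, hp, rfl⟩
  have hx₀lt : sInf (Prod.fst '' P) < k / c₀ := by
    rw [← hx₀, lt_div_iff₀ hc₀, mul_comm]
    rwa [lt_div_iff₀ hx₀pos] at hc₀k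
  obtain ⟨y₀, hy₀⟩ := exists_forall_mk_mem_of_sInf_lt hup hne hbdd hx₀lt
  obtain ⟨q, hq⟩ := exists_nat_gt (max (c₀ * y₀) 0)
  set v : ℝ × ℝ := ((k : ℝ), (q : ℝ))
  have hv : c₀⁻¹ • v ∈ P := by
    have := hy₀ (q / c₀) (by rw [le_div_iff₀ hc₀, mul_comm]; exact (le_max_left _ _).trans hq.le)
    simpa [v, div_eq_inv_mul] using this
  have hb : ∀ t : ℝ, t • v ∈ P → x₀ / k ≤ t := fun t ht => by
    rw [div_le_iff₀ hkpos]
    simpa [v] using hlb _ ht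
  obtain ⟨t, hxt, htc, htv⟩ := exists_smul_mem_frontier_of_forall_le hclosed hv hb
  have hxt' : x₀ / k < t := by
    refine hxt.lt_of_ne fun h => hasym (t * q) ?_
    have := hclosed.frontier_subset htv
    simpa [v, ← h, div_mul_cancel₀ x₀ hkpos.ne'] using this
  have htpos : 0 < t := (div_pos hx₀pos hkpos).trans hxt'
  refine ⟨t⁻¹, ?_, ?_, q, ?_, ?_⟩
  · exact (le_inv_comm₀ htpos hc₀).1 htc
  · rw [← inv_div]
    exact inv_strictAnti₀ (div_pos hx₀pos hkpos) hxt'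
  · exact_mod_cast (le_max_right _ _).trans_lt hq
  · rw [frontier_smul₀ (inv_ne_zero htpos.ne')]
    exact ⟨t • v, htv, inv_smul_smul₀ htpos.ne' v⟩

end UpperSet

theorem asymptote_gives_cluster_points_general (P : Set (ℝ × ℝ))
    (hne : P.Nonempty) (hclosed : IsClosed P)
    (hquad : P ⊆ {p : ℝ × ℝ | 0 ≤ p.1 ∧ 0 ≤ p.2})
    (horth : P + {p : ℝ × ℝ | 0 ≤ p.1 ∧ 0 ≤ p.2} ⊆ P)
    (x₀ : ℝ) (hx₀ : x₀ = sInf (Prod.fst '' P)) (hx₀pos : 0 < x₀)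
    (hasym : ∀ t : ℝ, (x₀, t) ∉ P)
    (C : Set ℝ)
    (hC : C = {c : ℝ | 0 < c ∧ ∃ p q : ℕ, 0 < p ∧ 0 < q ∧
      ((p : ℝ), (q : ℝ)) ∈ frontier (c • P)})
    (k : ℕ) (hk : 0 < k) :
    (k : ℝ) / x₀ ∈ closure (C \ {(k : ℝ) / x₀}) := by
  have hbdd : BddBelow (Prod.fst '' P) := ⟨0, by rintro _ ⟨p, hp, rfl⟩; exact (hquad hp).1⟩
  refine mem_closure_diff_singleton_of_eventually ?_
  filter_upwards [Ioo_mem_nhdsLT (div_pos (Nat.cast_pos.2 hk) hx₀pos)] with c₀ ⟨hc₀, hc₀k⟩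
  obtain ⟨c, hc₀c, hck, q, hq, hfr⟩ :=
    exists_mem_frontier_smul_of_lt_div hclosed (isUpperSet_of_add_quadrant_subset horth) hne hbdd
      hx₀ hx₀pos hasym hk hc₀ hc₀k
  exact ⟨c, hC ▸ ⟨hc₀.trans_le hc₀c, k, q, hk, hq, hfr⟩, hc₀c, hck⟩

/-- Let P ⊆ ℝ_{≥0}² be nonempty, closed, convex, with P + ℝ_{≥0}² ⊆ P. Assume
x₀ = inf pr₁(P) > 0 and the vertical line x = x₀ is disjoint from P. Then for
every positive integer k, the number k/x₀ is a cluster point of the set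
C = { c > 0 : ∂(cP) contains a point of ℤ_{>0}² }. -/
theorem asymptote_gives_cluster_points (P : Set (ℝ × ℝ))
    (hne : P.Nonempty) (hclosed : IsClosed P) (hconv : Convex ℝ P)
    (hquad : P ⊆ {p : ℝ × ℝ | 0 ≤ p.1 ∧ 0 ≤ p.2})
    (horth : P + {p : ℝ × ℝ | 0 ≤ p.1 ∧ 0 ≤ p.2} ⊆ P)
    (x₀ : ℝ) (hx₀ : x₀ = sInf (Prod.fst '' P)) (hx₀pos : 0 < x₀)
    (hasym : ∀ t : ℝ, (x₀, t) ∉ P)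
    (C : Set ℝ)
    (hC : C = {c : ℝ | 0 < c ∧ ∃ p q : ℕ, 0 < p ∧ 0 < q ∧
      ((p : ℝ), (q : ℝ)) ∈ frontier (c • P)})
    (k : ℕ) (hk : 0 < k) :
    (k : ℝ) / x₀ ∈ closure (C \ {(k : ℝ) / x₀}) :=
  asymptote_gives_cluster_points_general P hne hclosed hquad horth x₀ hx₀ hx₀pos hasym C hC k hk
end
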